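/- Let 0 < c < 1 be a constant. There exist ε > 0 (one may take ε = c/3) and n_0 such that for all n ≥ n_0 the following holds: let D be the flip distribution with p_1 = n^{−c}, p_2 = 1 − n^{−c}, and p_i = 0 for all i ∉ {1,2}. Then the expected runtime of the (1+1)-EA_D on OneMax (f = OM) is at most (1−ε)·(1/p_1)·n·ln n = (1−ε)·n^{1+c}·ln n. -/

import Mathlib

open scoped BigOperators ENNReal Classical

/-- The search space `{0,1}^n`. -/
abbrev Point (n : ℕ) := Fin n → Bool

/-- `OM x` is the number of one-bits of `x`. -/
def OM {n : ℕ} (x : Point n) : ℕ := (Finset.univ.filter fun i => x i = true).card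

/-- Hamming distance between two points. -/
def hamming {n : ℕ} (x y : Point n) : ℕ := (Finset.univ.filter fun i => x i ≠ y i).card

/-- A flip distribution `D = (p_0, …, p_n)` on `{0,…,n}`. -/
structure FlipDist (n : ℕ) where
  p : ℕ → ℝ
  nonneg : ∀ k, 0 ≤ p k
  sum_eq : ∑ k ∈ Finset.range (n+1), p k = 1
  zero_of_gt : ∀ k, n < k → p k = 0

/-- The mean `χ = Σ k·p_k` of a flip distribution. -/
noncomputable def FlipDist.mean {n : ℕ} (D : FlipDist n) : ℝ :=
  ∑ k ∈ Finset.range (n+1), (k : ℝ) * D.p k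

/-- `mutP D x y` is the probability that `mut_D(x) = y`: sample `k ∼ D`, then flip a
uniformly random set of exactly `k` positions.  Exactly one `k`-set maps `x` to `y`,
namely when `k` is the Hamming distance. -/
noncomputable def mutP {n : ℕ} (D : FlipDist n) (x y : Point n) : ℝ :=
  D.p (hamming x y) / (Nat.choose n (hamming x y) : ℝ)

/-- `x` is a global maximum of `f`. -/
def isOpt {n : ℕ} (f : Point n → ℝ) (x : Point n) : Prop := ∀ y, f y ≤ f x

/-- One-step transition probability of the elitist (1+1)-EA_D maximizing `f`. -/
noncomputable def eaStep {n : ℕ} (D : FlipDist n) (f : Point n → ℝ) (x y : Point n) : ℝ :=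
  (if f x ≤ f y then mutP D x y else 0) +
  (if y = x then ∑ z ∈ Finset.univ.filter (fun z => f z < f x), mutP D x z else 0)

/-- Distribution of the current search point `x^(t)` of the (1+1)-EA_D maximizing `f`,
with initial distribution `init`. -/
noncomputable def eaDist {n : ℕ} (D : FlipDist n) (f : Point n → ℝ)
    (init : Point n → ℝ) : ℕ → Point n → ℝ
  | 0 => init
  | t+1 => fun y => ∑ x : Point n, eaDist D f init t x * eaStep D f x y

/-- `survival D f init t = Pr[T > t]`: since the set of global maxima is absorbing for the
elitist chain, this is the probability that `x^(t)` is not a global maximum of `f`. -/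
noncomputable def survival {n : ℕ} (D : FlipDist n) (f : Point n → ℝ)
    (init : Point n → ℝ) (t : ℕ) : ℝ :=
  ∑ x ∈ Finset.univ.filter (fun x => ¬ isOpt f x), eaDist D f init t x

/-- Expected runtime `E[T] = Σ_{t≥0} Pr[T > t]` of the (1+1)-EA_D on `f`. -/
noncomputable def expRuntime {n : ℕ} (D : FlipDist n) (f : Point n → ℝ)
    (init : Point n → ℝ) : ℝ≥0∞ :=
  ∑' t : ℕ, ENNReal.ofReal (survival D f init t)

/-- The uniform initial distribution on `{0,1}^n`. -/
noncomputable def uniformInit (n : ℕ) : Point n → ℝ := fun _ => ((2:ℝ)^n)⁻¹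

/-- The linear function `f(x) = Σ w_i x_i`. -/
noncomputable def linF {n : ℕ} (w : Fin n → ℝ) : Point n → ℝ :=
  fun x => ∑ i : Fin n, w i * (if x i then 1 else 0)

/-!
Fitness levels through additive drift. From a point with `j` zero-bits, every mutation that
flips a nonempty set of zero-bits improves, so the improvement probability is at least
`s_j = ∑_k C(j,k) p_k / C(n,k)`. The potential `∑_{1 ≤ j ≤ n - OM x} 1/s_j` drops by at least one
in expectation in every non-optimal step, hence `E[T] ≤ ∑_{j=1}^n 1/s_j`. Bounding
`s_j ≥ j p₁/n` for `j ≤ m` and `s_j ≥ j(j-1)/(2n²)` (as `p₂ ≥ 1/2`) for `j > m` gives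
`E[T] ≤ (n/p₁)(1 + ln m) + 2n²/m`, and for `m ≈ n^{1-c/2}` this is
`(1 - c/2 + o(1)) n^{1+c} ln n + O(n^{1+c/2})`.
-/

namespace OneMaxEA

open Finset

variable {n : ℕ}

def flipSet (x : Point n) (S : Finset (Fin n)) : Point n :=
  fun i => if i ∈ S then !x i else x i

def flipEquiv (x : Point n) : Finset (Fin n) ≃ Point n where
  toFun := flipSet x
  invFun y := univ.filter fun i => x i ≠ y i
  left_inv S := by ext i; by_cases h : i ∈ S <;> simp [flipSet, h]
  right_inv y := by funext i; cases hx : x i <;> cases hy : y i <;> simp [flipSet, hx, hy]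

lemma hamming_flipSet (x : Point n) (S : Finset (Fin n)) : hamming x (flipSet x S) = #S :=
  congrArg Finset.card ((flipEquiv x).left_inv S)

lemma sum_apply_hamming {M : Type*} [AddCommMonoid M] (x : Point n) (F : ℕ → M) :
    ∑ y, F (hamming x y) = ∑ k ∈ range (n + 1), n.choose k • F k := by
  rw [← (flipEquiv x).sum_comp]
  simp only [flipEquiv, Equiv.coe_fn_mk, hamming_flipSet]
  rw [← powerset_univ, sum_powerset_apply_card, card_univ, Fintype.card_fin]

lemma mutP_nonneg (D : FlipDist n) (x y : Point n) : 0 ≤ mutP D x y :=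
  div_nonneg (D.nonneg _) (Nat.cast_nonneg _)

lemma sum_mutP (D : FlipDist n) (x : Point n) : ∑ y, mutP D x y = 1 := by
  rw [← D.sum_eq]
  refine (sum_apply_hamming x fun k => D.p k / n.choose k).trans (sum_congr rfl fun k hk => ?_)
  have hk : (n.choose k : ℝ) ≠ 0 := by
    exact_mod_cast (Nat.choose_pos (Nat.lt_succ_iff.1 (mem_range.1 hk))).ne'
  rw [nsmul_eq_mul, mul_div_cancel₀ _ hk]

lemma OM_le (x : Point n) : OM x ≤ n :=
  (card_filter_le _ _).trans_eq (card_fin n)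

lemma isOpt_OM_iff (x : Point n) : isOpt (fun y => (OM y : ℝ)) x ↔ OM x = n := by
  have hones : OM (fun _ : Fin n => true) = n := by simp [OM]
  refine ⟨fun h => (OM_le x).antisymm ?_, fun h y => ?_⟩
  · have : (OM fun _ : Fin n => true : ℝ) ≤ OM x := h fun _ => true
    rwa [hones, Nat.cast_le] at this
  · show (OM y : ℝ) ≤ OM x
    rw [h, Nat.cast_le]
    exact OM_le y

lemma card_filter_eq_false (x : Point n) : #(univ.filter fun i => x i = false) = n - OM x := by
  have h := card_filter_add_card_filter_not (s := (univ : Finset (Fin n))) (fun i => x i = true)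
  simp only [Bool.not_eq_true, card_univ, Fintype.card_fin] at h
  rw [OM]
  omega

lemma OM_flipSet_of_eq_false (x : Point n) {S : Finset (Fin n)} (hS : ∀ i ∈ S, x i = false) :
    OM (flipSet x S) = OM x + #S := by
  have hdisj : Disjoint (univ.filter fun i => x i = true) S :=
    disjoint_left.2 fun i hi hiS => by simp [hS i hiS] at hi
  rw [OM, OM, ← card_union_of_disjoint hdisj]
  congr 1
  ext i
  by_cases h : i ∈ S <;> simp [flipSet, h, hS]

lemma sum_powerset_erase_empty_apply_card {M β : Type*} [AddCancelCommMonoid M] (f : ℕ → M)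
    (Z : Finset β) :
    ∑ S ∈ Z.powerset.erase ∅, f #S = ∑ k ∈ range #Z, (#Z).choose (k + 1) • f (k + 1) := by
  have h := sum_powerset_apply_card f (x := Z)
  rw [← add_sum_erase _ _ (empty_mem_powerset Z), sum_range_succ'] at h
  simpa [add_comm] using h

/-- The probability that `mut_D` flips a nonempty set of positions inside a fixed set of `j`
positions. -/
noncomputable def flipWithinProb (D : FlipDist n) (j : ℕ) : ℝ :=
  ∑ k ∈ range j, (j.choose (k + 1) : ℝ) * (D.p (k + 1) / n.choose (k + 1))

lemma choose_mul_le_flipWithinProb (D : FlipDist n) {j k : ℕ} (hk : 1 ≤ k) (hkj : k ≤ j) :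
    (j.choose k : ℝ) * (D.p k / n.choose k) ≤ flipWithinProb D j := by
  obtain ⟨k, rfl⟩ := Nat.exists_eq_add_of_le' hk
  refine single_le_sum (f := fun k => (j.choose (k + 1) : ℝ) * (D.p (k + 1) / n.choose (k + 1)))
    (fun i _ => ?_) (mem_range.2 (by omega))
  have := D.nonneg (i + 1)
  positivity

lemma flipWithinProb_nonneg (D : FlipDist n) (j : ℕ) : 0 ≤ flipWithinProb D j :=
  sum_nonneg fun k _ => by have := D.nonneg (k + 1); positivity

lemma flipWithinProb_pos (D : FlipDist n) (hp1 : 0 < D.p 1) {j : ℕ} (hj : 1 ≤ j) (hjn : j ≤ n) :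
    0 < flipWithinProb D j := by
  have hj0 : (0 : ℝ) < j := by exact_mod_cast hj
  have hn0 : (0 : ℝ) < n := by exact_mod_cast hj.trans hjn
  have h := choose_mul_le_flipWithinProb D le_rfl hj
  rw [Nat.choose_one_right, Nat.choose_one_right] at h
  exact lt_of_lt_of_le (by positivity) h

lemma flipWithinProb_le_improveProb (D : FlipDist n) (x : Point n) :
    flipWithinProb D (n - OM x) ≤ ∑ y ∈ univ.filter (fun y => OM x < OM y), mutP D x y := by
  set Z := univ.filter fun i => x i = false
  have hZ : ∀ S ∈ Z.powerset.erase ∅, ∀ i ∈ S, x i = false := fun S hS i hi =>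
    (mem_filter.1 (mem_powerset.1 (mem_of_mem_erase hS) hi)).2
  calc flipWithinProb D (n - OM x) = ∑ S ∈ Z.powerset.erase ∅, mutP D x (flipSet x S) := by
        rw [flipWithinProb, ← card_filter_eq_false]
        simpa [mutP, hamming_flipSet, nsmul_eq_mul] using
          (sum_powerset_erase_empty_apply_card (fun k => D.p k / (n.choose k : ℝ)) Z).symm
    _ = ∑ y ∈ (Z.powerset.erase ∅).image (flipSet x), mutP D x y :=
        (sum_image fun S _ T _ h => (flipEquiv x).injective h).symm
    _ ≤ _ := by
        refine sum_le_sum_of_subset_of_nonneg (fun y hy => ?_) fun y _ _ => mutP_nonneg D x y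
        obtain ⟨S, hS, rfl⟩ := mem_image.1 hy
        have hne : #S ≠ 0 := card_ne_zero.2 (nonempty_iff_ne_empty.2 (ne_of_mem_erase hS))
        simp only [mem_filter, mem_univ, true_and, OM_flipSet_of_eq_false x (hZ S hS)]
        omega

section Elitist

variable (D : FlipDist n) (f : Point n → ℝ)

lemma eaStep_nonneg (x y : Point n) : 0 ≤ eaStep D f x y := by
  unfold eaStep
  have := mutP_nonneg D x y
  have := sum_nonneg fun z (_ : z ∈ univ.filter fun z => f z < f x) => mutP_nonneg D x z
  split_ifs <;> linarith

lemma sum_eaStep_mul (x : Point n) (φ : Point n → ℝ) :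
    ∑ y, eaStep D f x y * φ y
      = φ x - ∑ y ∈ univ.filter (fun y => f x ≤ f y), mutP D x y * (φ x - φ y) := by
  have hsplit := sum_filter_add_sum_filter_not univ (fun y => f x ≤ f y) (mutP D x)
  rw [sum_mutP] at hsplit
  simp only [not_le] at hsplit
  simp only [eaStep, add_mul, ite_mul, zero_mul, sum_add_distrib, sum_ite_eq', mem_univ,
    if_true, ← sum_filter, mul_sub, sum_sub_distrib]
  rw [← sum_mul]
  linear_combination φ x * hsplit

lemma sum_eaStep_mul_le {x : Point n} {φ : Point n → ℝ} {δ : ℝ}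
    (hφ : ∀ y, f x ≤ f y → φ y ≤ φ x) (hδ : ∀ y, f x < f y → δ ≤ φ x - φ y) :
    ∑ y, eaStep D f x y * φ y ≤ φ x - δ * ∑ y ∈ univ.filter (fun y => f x < f y), mutP D x y := by
  rw [sum_eaStep_mul, mul_sum]
  gcongr φ x - ?_
  calc ∑ y ∈ univ.filter (fun y => f x < f y), δ * mutP D x y
      ≤ ∑ y ∈ univ.filter (fun y => f x < f y), mutP D x y * (φ x - φ y) :=
        sum_le_sum fun y hy => by
          rw [mul_comm]
          exact mul_le_mul_of_nonneg_left (hδ y (mem_filter.1 hy).2) (mutP_nonneg D x y)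
    _ ≤ ∑ y ∈ univ.filter (fun y => f x ≤ f y), mutP D x y * (φ x - φ y) :=
        sum_le_sum_of_subset_of_nonneg (monotone_filter_right _ fun _ _ => le_of_lt)
          fun y hy _ => mul_nonneg (mutP_nonneg D x y) (sub_nonneg.2 (hφ y (mem_filter.1 hy).2))

variable {init : Point n → ℝ}

lemma eaDist_nonneg (hinit : ∀ x, 0 ≤ init x) (t : ℕ) (x : Point n) : 0 ≤ eaDist D f init t x := by
  induction t generalizing x with
  | zero => exact hinit x
  | succ t ih => exact sum_nonneg fun z _ => mul_nonneg (ih z) (eaStep_nonneg D f z x)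

lemma survival_nonneg (hinit : ∀ x, 0 ≤ init x) (t : ℕ) : 0 ≤ survival D f init t :=
  sum_nonneg fun x _ => eaDist_nonneg D f hinit t x

noncomputable def eaExpect (init : Point n → ℝ) (φ : Point n → ℝ) (t : ℕ) : ℝ :=
  ∑ x, eaDist D f init t x * φ x

lemma eaExpect_succ (φ : Point n → ℝ) (t : ℕ) :
    eaExpect D f init φ (t + 1) = ∑ x, eaDist D f init t x * ∑ y, eaStep D f x y * φ y := by
  simp only [eaExpect, eaDist, sum_mul, mul_sum, mul_assoc]
  exact sum_comm

theorem expRuntime_le_of_drift (hinit : ∀ x, 0 ≤ init x) {φ : Point n → ℝ} (hφ : ∀ x, 0 ≤ φ x)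
    (hdrift : ∀ x, ∑ y, eaStep D f x y * φ y ≤ φ x - if isOpt f x then 0 else 1) :
    expRuntime D f init ≤ ENNReal.ofReal (∑ x, init x * φ x) := by
  have hstep : ∀ t, survival D f init t ≤ eaExpect D f init φ t - eaExpect D f init φ (t + 1) := by
    intro t
    have hsurv : survival D f init t = ∑ x, eaDist D f init t x * if isOpt f x then 0 else 1 := by
      simp only [survival, sum_filter, mul_ite, mul_zero, mul_one, ite_not]
    rw [hsurv, eaExpect_succ, eaExpect, ← sum_sub_distrib]
    refine sum_le_sum fun x _ => ?_
    have := mul_le_mul_of_nonneg_left (hdrift x) (eaDist_nonneg D f hinit t x)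
    linarith
  refine ENNReal.tsum_le_of_sum_range_le fun T => ?_
  rw [← ENNReal.ofReal_sum_of_nonneg fun t _ => survival_nonneg D f hinit t]
  refine ENNReal.ofReal_le_ofReal ?_
  calc ∑ t ∈ range T, survival D f init t
      ≤ ∑ t ∈ range T, (eaExpect D f init φ t - eaExpect D f init φ (t + 1)) :=
        sum_le_sum fun t _ => hstep t
    _ = eaExpect D f init φ 0 - eaExpect D f init φ T := sum_range_sub' _ T
    _ ≤ ∑ x, init x * φ x :=
        sub_le_self _ (sum_nonneg fun x _ => mul_nonneg (eaDist_nonneg D f hinit T x) (hφ x))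

end Elitist

section LevelTime

variable (D : FlipDist n)

noncomputable def levelTime (v : ℕ) : ℝ :=
  ∑ i ∈ range (n - v), (flipWithinProb D (i + 1))⁻¹

lemma levelTime_nonneg (v : ℕ) : 0 ≤ levelTime D v :=
  sum_nonneg fun i _ => inv_nonneg.2 (flipWithinProb_nonneg D (i + 1))

lemma levelTime_antitone : Antitone (levelTime D) := fun _ _ hvw =>
  sum_le_sum_of_subset_of_nonneg (range_subset_range.2 (Nat.sub_le_sub_left hvw n))
    fun i _ _ => inv_nonneg.2 (flipWithinProb_nonneg D (i + 1))

lemma levelTime_eq_succ_add {v : ℕ} (hv : v < n) :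
    levelTime D v = levelTime D (v + 1) + (flipWithinProb D (n - v))⁻¹ := by
  rw [levelTime, levelTime, show n - v = n - (v + 1) + 1 by omega, sum_range_succ]

lemma sum_eaStep_mul_levelTime_le (hp1 : 0 < D.p 1) (x : Point n) :
    ∑ y, eaStep D (fun z => (OM z : ℝ)) x y * levelTime D (OM y)
      ≤ levelTime D (OM x) - if isOpt (fun z => (OM z : ℝ)) x then 0 else 1 := by
  have hmono : ∀ y : Point n, (OM x : ℝ) ≤ OM y → levelTime D (OM y) ≤ levelTime D (OM x) :=
    fun y h => levelTime_antitone D (by exact_mod_cast h)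
  rw [isOpt_OM_iff]
  split_ifs with hopt
  · simpa using sum_eaStep_mul_le D _ (δ := 0) hmono fun y h => sub_nonneg.2 (hmono y h.le)
  have hv : OM x < n := (OM_le x).lt_of_ne hopt
  set s := flipWithinProb D (n - OM x)
  have hs : 0 < s := flipWithinProb_pos D hp1 (by omega) (Nat.sub_le n _)
  have hgap : ∀ y : Point n, (OM x : ℝ) < OM y → s⁻¹ ≤ levelTime D (OM x) - levelTime D (OM y) := by
    intro y hy
    have := levelTime_antitone D (show OM x + 1 ≤ OM y by exact_mod_cast hy)
    rw [levelTime_eq_succ_add D hv]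
    linarith
  have himprove : 1 ≤ s⁻¹ * ∑ y ∈ univ.filter (fun y => (OM x : ℝ) < OM y), mutP D x y := by
    rw [inv_mul_eq_div, one_le_div hs]
    simpa only [Nat.cast_lt] using flipWithinProb_le_improveProb D x
  linarith [sum_eaStep_mul_le D (fun z => (OM z : ℝ)) hmono hgap]

theorem expRuntime_OM_le (hp1 : 0 < D.p 1) {init : Point n → ℝ} (hinit : ∀ x, 0 ≤ init x)
    (hinit_sum : ∑ x, init x = 1) :
    expRuntime D (fun x => (OM x : ℝ)) init ≤ ENNReal.ofReal (levelTime D 0) := by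
  refine (expRuntime_le_of_drift D _ hinit (fun x => levelTime_nonneg D (OM x))
    (sum_eaStep_mul_levelTime_le D hp1)).trans (ENNReal.ofReal_le_ofReal ?_)
  calc ∑ x, init x * levelTime D (OM x) ≤ ∑ x, init x * levelTime D 0 :=
        sum_le_sum fun x _ =>
          mul_le_mul_of_nonneg_left (levelTime_antitone D (Nat.zero_le _)) (hinit x)
    _ = levelTime D 0 := by rw [← sum_mul, hinit_sum, one_mul]

end LevelTime

lemma sum_uniformInit : ∑ x, uniformInit n x = 1 := by
  simp [uniformInit]

section Estimates

variable (D : FlipDist n)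

lemma inv_flipWithinProb_le_of_one (hp1 : 0 < D.p 1) {j : ℕ} (hj : 1 ≤ j) (hjn : j ≤ n) :
    (flipWithinProb D j)⁻¹ ≤ n / D.p 1 * (j : ℝ)⁻¹ := by
  have hj0 : (0 : ℝ) < j := by exact_mod_cast hj
  have hn0 : (0 : ℝ) < n := by exact_mod_cast hj.trans hjn
  have h := choose_mul_le_flipWithinProb D le_rfl hj
  rw [Nat.choose_one_right, Nat.choose_one_right] at h
  calc (flipWithinProb D j)⁻¹ ≤ ((j : ℝ) * (D.p 1 / n))⁻¹ := inv_anti₀ (by positivity) h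
    _ = n / D.p 1 * (j : ℝ)⁻¹ := by field_simp

lemma inv_flipWithinProb_succ_le_of_two (hp2 : 1 / 2 ≤ D.p 2) {i : ℕ} (hi : 1 ≤ i)
    (hin : i + 1 ≤ n) :
    (flipWithinProb D (i + 1))⁻¹ ≤ 2 * n ^ 2 * ((i : ℝ)⁻¹ - ((i + 1 : ℕ) : ℝ)⁻¹) := by
  have hi0 : (0 : ℝ) < i := by exact_mod_cast hi
  have hn1 : (1 : ℝ) < n := by exact_mod_cast (show 1 < n by omega)
  have hchoose : (n.choose 2 : ℝ) ≤ n ^ 2 / 2 := by rw [Nat.cast_choose_two]; nlinarith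
  have hbound : ((i : ℝ) + 1) * i / (2 * (n : ℝ) ^ 2) ≤ flipWithinProb D (i + 1) := by
    refine le_trans ?_ (choose_mul_le_flipWithinProb D (k := 2) (by omega) (by omega))
    rw [Nat.cast_choose_two]
    calc ((i : ℝ) + 1) * i / (2 * n ^ 2) = ((i + 1 : ℕ) : ℝ) * ((i + 1 : ℕ) - 1) / 2 *
          (1 / 2 / (n ^ 2 / 2)) := by push_cast; field_simp; ring
      _ ≤ ((i + 1 : ℕ) : ℝ) * ((i + 1 : ℕ) - 1) / 2 * (D.p 2 / n.choose 2) := by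
          have : (0 : ℝ) < n.choose 2 := by exact_mod_cast Nat.choose_pos (by omega)
          gcongr
          push_cast
          nlinarith
  calc (flipWithinProb D (i + 1))⁻¹ ≤ (((i : ℝ) + 1) * i / (2 * (n : ℝ) ^ 2))⁻¹ :=
        inv_anti₀ (by positivity) hbound
    _ = _ := by push_cast; field_simp; ring

lemma levelTime_zero_le (hp1 : 0 < D.p 1) (hp2 : 1 / 2 ≤ D.p 2) {m : ℕ} (hm : 1 ≤ m)
    (hmn : m ≤ n) :
    levelTime D 0 ≤ n / D.p 1 * (1 + Real.log m) + 2 * n ^ 2 / m := by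
  rw [levelTime, Nat.sub_zero, ← sum_range_add_sum_Ico _ hmn]
  gcongr
  · calc ∑ i ∈ range m, (flipWithinProb D (i + 1))⁻¹
        ≤ ∑ i ∈ range m, n / D.p 1 * ((i + 1 : ℕ) : ℝ)⁻¹ :=
          sum_le_sum fun i hi => inv_flipWithinProb_le_of_one D hp1 (by omega)
            (by have := mem_range.1 hi; omega)
      _ = n / D.p 1 * harmonic m := by simp [harmonic, mul_sum]
      _ ≤ n / D.p 1 * (1 + Real.log m) := by gcongr; exact harmonic_le_one_add_log m
  · calc ∑ i ∈ Ico m n, (flipWithinProb D (i + 1))⁻¹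
        ≤ ∑ i ∈ Ico m n, 2 * n ^ 2 * ((i : ℝ)⁻¹ - ((i + 1 : ℕ) : ℝ)⁻¹) :=
          sum_le_sum fun i hi => by
            have := mem_Ico.1 hi
            exact inv_flipWithinProb_succ_le_of_two D hp2 (by omega) (by omega)
      _ = 2 * n ^ 2 * ((m : ℝ)⁻¹ - (n : ℝ)⁻¹) := by
          rw [← mul_sum, ← neg_sub (n : ℝ)⁻¹, ← sum_Ico_sub (fun k : ℕ => (k : ℝ)⁻¹) hmn,
            ← sum_neg_distrib]
          simp only [neg_sub]
      _ ≤ 2 * n ^ 2 / m := by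
          rw [div_eq_mul_inv]
          gcongr
          exact sub_le_self _ (by positivity)

end Estimates

lemma exists_split_le {c : ℝ} (hc0 : 0 < c) (hc2 : c ≤ 2) {n : ℕ} (hn : 1 ≤ n)
    (hpow : 2 ≤ (n : ℝ) ^ (c / 2)) (hlog : 2 + Real.log 2 ≤ c / 6 * Real.log n) :
    ∃ m : ℕ, 1 ≤ m ∧ m ≤ n ∧
      n * n ^ c * (1 + Real.log m) + 2 * n ^ 2 / m ≤ (1 - c / 3) * n ^ c * n * Real.log n := by
  have hn1 : (1 : ℝ) ≤ n := by exact_mod_cast hn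
  have hn0 : (0 : ℝ) < n := by linarith
  set r : ℝ := (n : ℝ) ^ (1 - c / 2)
  have hr1 : 1 ≤ r := Real.one_le_rpow hn1 (by linarith)
  have hrn : r ≤ n := (Real.rpow_le_rpow_of_exponent_le hn1 (by linarith : 1 - c / 2 ≤ 1)).trans
    (Real.rpow_one _).le
  refine ⟨⌈r⌉₊, Nat.one_le_iff_ne_zero.2 (Nat.ceil_pos.2 (by linarith)).ne', Nat.ceil_le.2 hrn,
    ?_⟩
  have hrm : r ≤ ⌈r⌉₊ := Nat.le_ceil r
  have hlogm : Real.log ⌈r⌉₊ ≤ Real.log 2 + (1 - c / 2) * Real.log n := by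
    calc Real.log ⌈r⌉₊ ≤ Real.log (2 * r) :=
          Real.log_le_log (by linarith) (by linarith [Nat.ceil_lt_add_one (by linarith : 0 ≤ r)])
      _ = Real.log 2 + (1 - c / 2) * Real.log n := by
          rw [Real.log_mul two_ne_zero (by linarith), Real.log_rpow hn0]
  have hnr : (n : ℝ) ^ c * r = n * n ^ (c / 2) := by
    rw [← Real.rpow_add hn0, show c + (1 - c / 2) = 1 + c / 2 by ring, Real.rpow_add hn0,
      Real.rpow_one]
  have htail : 2 * (n : ℝ) ^ 2 / ⌈r⌉₊ ≤ n * n ^ c := by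
    calc 2 * (n : ℝ) ^ 2 / ⌈r⌉₊ ≤ 2 * (n : ℝ) ^ 2 / r := by gcongr
      _ ≤ (n : ℝ) * (n : ℝ) ^ c := by
          rw [div_le_iff₀ (by linarith), mul_assoc, hnr]
          nlinarith
  have hlogm' : 2 + Real.log ⌈r⌉₊ ≤ (1 - c / 3) * Real.log n := by linarith
  calc _ ≤ n * n ^ c * (2 + Real.log ⌈r⌉₊) := by linarith
    _ ≤ n * n ^ c * ((1 - c / 3) * Real.log n) := by gcongr
    _ = _ := by ring

end OneMaxEA

open OneMaxEA Filter

/-- Let `0 < c < 1`. There exist `ε > 0` and `n₀` such that for all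
`n ≥ n₀`: for the flip distribution with `p₁ = n^{−c}`, `p₂ = 1 − n^{−c}` and `p_i = 0`
otherwise, the expected runtime of the (1+1)-EA_D on OneMax is at most
`(1−ε)·(1/p₁)·n·ln n`. -/
theorem stmt5 (c : ℝ) (hc0 : 0 < c) (hc1 : c < 1) :
    ∃ ε : ℝ, 0 < ε ∧ ∃ n0 : ℕ, ∀ n : ℕ, n0 ≤ n → ∀ D : FlipDist n,
      D.p 1 = (n : ℝ) ^ (-c) →
      D.p 2 = 1 - (n : ℝ) ^ (-c) →
      (∀ k, k ≠ 1 → k ≠ 2 → D.p k = 0) →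
      expRuntime D (fun x => (OM x : ℝ)) (uniformInit n)
          ≤ ENNReal.ofReal ((1 - ε) * (1 / D.p 1) * n * Real.log n) := by
  have hcast := tendsto_natCast_atTop_atTop (R := ℝ)
  have hsmall := ((tendsto_rpow_neg_atTop hc0).comp hcast).eventually
    (eventually_le_nhds one_half_pos)
  have hpow := ((tendsto_rpow_atTop (half_pos hc0)).comp hcast).eventually_ge_atTop 2
  have hlog := ((Real.tendsto_log_atTop.comp hcast).const_mul_atTop
    (by positivity : 0 < c / 6)).eventually_ge_atTop (2 + Real.log 2)
  obtain ⟨n0, hn0⟩ := eventually_atTop.1 <|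
    (eventually_ge_atTop 1).and <| hsmall.and <| hpow.and hlog
  refine ⟨c / 3, by positivity, n0, fun n hn D hD1 hD2 _ => ?_⟩
  obtain ⟨hn1, hsmall_n, hpow_n, hlog_n⟩ := hn0 n hn
  have hn0 : (0 : ℝ) < n := by exact_mod_cast hn1
  have hp1 : 0 < D.p 1 := hD1 ▸ Real.rpow_pos_of_pos hn0 _
  have hp2 : 1 / 2 ≤ D.p 2 := by rw [hD2]; linarith [show (n : ℝ) ^ (-c) ≤ 1 / 2 from hsmall_n]
  have hinv : (n : ℝ) / D.p 1 = n * n ^ c := by rw [hD1, Real.rpow_neg hn0.le, div_inv_eq_mul]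
  obtain ⟨m, hm1, hmn, hm⟩ := exists_split_le hc0 (by linarith) hn1 hpow_n hlog_n
  calc expRuntime D (fun x => (OM x : ℝ)) (uniformInit n) ≤ ENNReal.ofReal (levelTime D 0) :=
        expRuntime_OM_le D hp1 (fun _ => inv_nonneg.2 (by positivity)) sum_uniformInit
    _ ≤ _ := by
        refine ENNReal.ofReal_le_ofReal ((levelTime_zero_le D hp1 hp2 hm1 hmn).trans ?_)
        rw [hinv, one_div, hD1, Real.rpow_neg hn0.le, inv_inv]
        exact hm
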